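/- Let k be an even positive integer and ℓ an odd positive integer, set q := 2^k and Q := 2^ℓ, and let B(X) := (X^Q + X + 1)/(X² + X + 1) ∈ F₂[X]. If r is a positive integer with gcd(r, q-1) = 1 and r ≡ Q - 1 (mod q+1), then X^r · B(X^{q-1}) is a permutation polynomial of F_{q²}. -/

import Mathlib

/-!
Write `μ = {u | u ^ (q + 1) = 1}`. Since every `c ≠ 0` has `c ^ (q - 1) ∈ μ` and
`gcd(r, q - 1) = 1`, the map `c ↦ c ^ r B(c ^ (q - 1))` is injective as soon as `B` does not
vanish on `μ` and `u ↦ u ^ r B(u) ^ (q - 1)` is injective on `μ`. On `μ` we have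
`u ^ q = u⁻¹` and `u ^ r = u ^ (Q - 1)`, and a Frobenius computation turns the latter map into
`ratMap Q u = u (u ^ Q + u ^ (Q - 1) + 1) / (u ^ Q + u + 1)`.

As `k` is even, `F` contains a primitive cube root of unity `ω`, with `ω ^ q = ω` and, as `ℓ` is
odd, `ω ^ Q = ω ^ 2`. The Möbius map `t x = (x + ω) / (x + ω ^ 2)` conjugates `ratMap Q` to
`x ↦ x ^ (Q - 1)` and sends `μ` into `{x | x ^ (q + 1) = ω ^ 2}`. On that coset the power map
`x ↦ x ^ (Q - 1)` is injective, because `gcd(Q - 1, q + 1) = 1` when `ℓ` is odd and `k` even.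
-/

open Function Set

namespace Nat

theorem two_pow_mod_three_of_even {n : ℕ} (hn : Even n) : 2 ^ n % 3 = 1 := by
  obtain ⟨m, rfl⟩ := hn
  rw [← two_mul, pow_mul, Nat.pow_mod]
  norm_num

theorem two_pow_mod_three_of_odd {n : ℕ} (hn : Odd n) : 2 ^ n % 3 = 2 := by
  obtain ⟨m, rfl⟩ := hn
  rw [pow_succ, pow_mul, Nat.mul_mod, Nat.pow_mod]
  norm_num

theorem coprime_two_pow_sub_one_two_pow_add_one {a b : ℕ} (ha : 0 < a)
    (h : gcd a (2 * b) ∣ b) : Coprime (2 ^ a - 1) (2 ^ b + 1) := by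
  set d := gcd (2 ^ a - 1) (2 ^ b + 1)
  have h2b : 2 ^ b + 1 ∣ 2 ^ (2 * b) - 1 := by
    have := Nat.sq_sub_sq (2 ^ b) 1
    rw [one_pow, ← pow_mul, mul_comm b] at this
    exact ⟨_, this⟩
  have hsub : d ∣ 2 ^ b - 1 := by
    refine (dvd_gcd (gcd_dvd_left _ _) ((gcd_dvd_right _ _).trans h2b)).trans ?_
    rw [pow_sub_one_gcd_pow_sub_one]
    obtain ⟨m, hm⟩ := h
    have := Nat.sub_dvd_pow_sub_pow (2 ^ gcd a (2 * b)) 1 m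
    rwa [one_pow, ← pow_mul, ← hm] at this
  have hd2 : d ∣ 2 := by
    have hb : 2 ^ b + 1 = 2 ^ b - 1 + 2 := by have := b.one_le_two_pow; omega
    exact (Nat.dvd_add_right hsub).mp (hb ▸ gcd_dvd_right _ _)
  have hodd : Coprime 2 (2 ^ a - 1) := coprime_two_left.mpr
    (Nat.Even.sub_odd a.one_le_two_pow (even_two.pow_of_ne_zero ha.ne') odd_one)
  exact eq_one_of_dvd_coprimes hodd hd2 (gcd_dvd_left _ _)

theorem coprime_two_pow_sq_sub_one_two_pow_add_one {k ℓ : ℕ} (hℓ : Odd ℓ) (hk : Even k) :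
    Coprime ((2 ^ ℓ) ^ 2 - 1) (2 ^ k + 1) := by
  rw [← pow_mul, mul_comm]
  refine coprime_two_pow_sub_one_two_pow_add_one (by have := hℓ.pos; omega) ?_
  rw [gcd_mul_left]
  exact Coprime.mul_dvd_of_dvd_of_dvd (coprime_two_left.mpr (hℓ.of_dvd_nat (gcd_dvd_left _ _)))
    hk.two_dvd (gcd_dvd_right _ _)

end Nat

theorem eq_of_pow_eq_pow_of_coprime {G : Type*} [CommGroupWithZero G] {x y : G} {m n : ℕ}
    (hmn : m.Coprime n) (hy : y ≠ 0) (hm : x ^ m = y ^ m) (hn : x ^ n = y ^ n) : x = y := by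
  rw [← div_eq_one_iff_eq hy, ← pow_eq_one_iff_of_coprime hmn]
  simp only [div_pow, hm, hn, div_self (pow_ne_zero _ hy), and_self]

section Field

variable {K : Type*} [Field K]

theorem injOn_add_div_add {a b : K} (hab : a ≠ b) :
    InjOn (fun x => (x + a) / (x + b)) {x | x + b ≠ 0} := by
  intro u hu v hv h
  rw [div_eq_div_iff hu hv] at h
  have : (b - a) * (u - v) = 0 := by linear_combination h
  exact sub_eq_zero.mp ((mul_eq_zero.mp this).resolve_left (sub_ne_zero.mpr hab.symm))

theorem injective_pow_mul_comp_pow {r d : ℕ} {h : K → K} {S : Set K} (hr : r ≠ 0)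
    (hrd : r.Coprime d) (hS : ∀ a ≠ 0, a ^ d ∈ S) (hh : ∀ u ∈ S, h u ≠ 0)
    (hinj : InjOn (fun u => u ^ r * h u ^ d) S) :
    Injective (fun c => c ^ r * h (c ^ d)) := by
  intro a b hab
  simp only at hab
  have hzero : ∀ c : K, c ^ r * h (c ^ d) = 0 ↔ c = 0 := fun c => by
    refine ⟨fun hc => by_contra fun hc0 => ?_, fun hc => by simp [hc, hr]⟩
    exact mul_ne_zero (pow_ne_zero r hc0) (hh _ (hS c hc0)) hc
  by_cases ha : a = 0
  · rw [ha, eq_comm, ← hzero b, ← hab, hzero a, ha]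
  have hb : b ≠ 0 := by rwa [Ne, ← hzero b, ← hab, hzero a]
  have hpow : a ^ d = b ^ d := hinj (hS a ha) (hS b hb) <| by
    simpa only [mul_pow, pow_right_comm _ r d] using congrArg (· ^ d) hab
  have hpow' : a ^ r = b ^ r := mul_right_cancel₀ (hh _ (hS b hb)) (hpow ▸ hab)
  exact eq_of_pow_eq_pow_of_coprime hrd hb hpow' hpow

theorem FiniteField.exists_sq_add_self_add_one_eq_zero [Finite K]
    (h : 3 ∣ Nat.card K - 1) : ∃ ω : K, ω ^ 2 + ω + 1 = 0 := by
  have : Fact (Nat.Prime 3) := ⟨Nat.prime_three⟩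
  obtain ⟨g, hg⟩ := exists_prime_orderOf_dvd_card' (G := Kˣ) 3 (by rwa [Nat.card_units])
  have hω : IsPrimitiveRoot (g : K) 3 := by
    rw [IsPrimitiveRoot.coe_units_iff, ← hg]
    exact IsPrimitiveRoot.orderOf g
  refine ⟨g, ?_⟩
  have := hω.geom_sum_eq_zero (by norm_num)
  simp only [Finset.sum_range_succ, Finset.sum_range_zero] at this
  linear_combination this

end Field

theorem sq_sq_add_sq_add_one_eq_zero {R : Type*} [CommRing R] {ω : R} (hω : ω ^ 2 + ω + 1 = 0) :
    (ω ^ 2) ^ 2 + ω ^ 2 + 1 = 0 := by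
  linear_combination (ω ^ 2 - ω + 1) * hω

section CharTwo

variable {F : Type*} [Field F] [CharP F 2]

def ratMap (Q : ℕ) (u : F) : F := (u ^ (Q + 1) + u ^ Q + u) / (u ^ Q + u + 1)

theorem pow_add_add_one_ne_zero {k ℓ : ℕ} (hcop : ((2 ^ ℓ) ^ 2 - 1).Coprime (2 ^ k + 1))
    {u : F} (hu : u ^ (2 ^ k + 1) = 1) : u ^ 2 ^ ℓ + u + 1 ≠ 0 := by
  intro h
  have hu0 : u ≠ 0 := by rintro rfl; simp at hu
  have hQ : u ^ 2 ^ ℓ = u + 1 := by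
    linear_combination h - (u + 1) * CharTwo.two_eq_zero (R := F)
  -- `u ^ Q = u + 1` gives `u ^ (Q ^ 2) = u`, so `u` is a `(Q ^ 2 - 1)`-th root of unity.
  have hQQ : u ^ ((2 ^ ℓ) ^ 2 - 1) = 1 := by
    rw [pow_sub₀ _ hu0 (Nat.one_le_pow _ _ (by positivity)), sq, pow_mul, hQ, add_pow_char_pow,
      hQ, one_pow, add_assoc, CharTwo.add_self_eq_zero, add_zero, pow_one, mul_inv_cancel₀ hu0]
  obtain rfl : u = 1 := (pow_eq_one_iff_of_coprime hcop).mp ⟨hQQ, hu⟩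
  exact one_ne_zero (by linear_combination h - CharTwo.two_eq_zero (R := F))

theorem add_ne_zero_of_pow_succ_eq_one {k : ℕ} {ζ u : F} (hζ : ζ ^ 2 + ζ + 1 = 0)
    (hζq : ζ ^ 2 ^ k = ζ) (hu : u ^ (2 ^ k + 1) = 1) : u + ζ ≠ 0 := by
  intro h
  obtain rfl : ζ = u := by linear_combination h - u * CharTwo.two_eq_zero (R := F)
  rw [pow_succ, hζq, ← sq] at hu
  have hζ0 : ζ = 0 := by linear_combination hζ - hu - CharTwo.two_eq_zero (R := F)
  simp [hζ0] at hu

theorem mul_add_pow_succ {k : ℕ} {ζ u : F} (hζ : ζ ^ 2 + ζ + 1 = 0) (hζq : ζ ^ 2 ^ k = ζ)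
    (hu : u ^ (2 ^ k + 1) = 1) : u * (u + ζ) ^ (2 ^ k + 1) = ζ * (u + ζ) * (u + ζ ^ 2) := by
  rw [pow_succ, add_pow_char_pow, hζq]
  linear_combination (u + ζ) * hu - (ζ - 1) * (u + ζ) * hζ

theorem pow_sub_one_mul_pow_sub_one_mul_eq {k Q : ℕ} (hQ : 1 ≤ Q) {u b : F}
    (hu : u ^ (2 ^ k + 1) = 1) (hb : b * (u ^ 2 + u + 1) = u ^ Q + u + 1) :
    u ^ (Q - 1) * b ^ (2 ^ k - 1) * (u ^ Q + u + 1) = u ^ (Q + 1) + u ^ Q + u := by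
  have hu0 : u ≠ 0 := by rintro rfl; simp at hu
  obtain ⟨Q, rfl⟩ := Nat.exists_eq_add_of_le' hQ
  set c := b ^ (2 ^ k - 1)
  have hbq : b ^ 2 ^ k = c * b := by rw [← pow_succ, Nat.sub_add_cancel Nat.one_le_two_pow]
  have hfrob : b ^ 2 ^ k * ((u ^ 2) ^ 2 ^ k + u ^ 2 ^ k + 1) =
      (u ^ (Q + 1)) ^ 2 ^ k + u ^ 2 ^ k + 1 := by
    have := congrArg (· ^ 2 ^ k) hb
    simp only [mul_pow] at this
    rwa [add_pow_char_pow, add_pow_char_pow, add_pow_char_pow, add_pow_char_pow, one_pow] at this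
  have hN : u ^ (Q + 2) * ((u ^ (Q + 1)) ^ 2 ^ k + u ^ 2 ^ k + 1) =
      u ^ (Q + 2) + u ^ (Q + 1) + u := by
    linear_combination u * congrArg (· ^ (Q + 1)) hu + u ^ (Q + 1) * hu
  have hD : u ^ 2 * ((u ^ 2) ^ 2 ^ k + u ^ 2 ^ k + 1) = u ^ 2 + u + 1 := by
    linear_combination (u ^ (2 ^ k + 1) + 1 + u) * hu
  apply mul_left_cancel₀ (pow_ne_zero 2 hu0)
  simp only [Nat.add_sub_cancel]
  linear_combination -u ^ (Q + 2) * c * hb - u ^ (Q + 2) * (u ^ 2 + u + 1) * hbq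
    - u ^ (Q + 2) * b ^ 2 ^ k * hD + u ^ (Q + 4) * hfrob + u ^ 2 * hN

theorem ratMap_add {ℓ : ℕ} {ζ u : F} (hζ : ζ ^ 2 + ζ + 1 = 0) (hζQ : ζ ^ 2 ^ ℓ = ζ ^ 2)
    (hN : u ^ 2 ^ ℓ + u + 1 ≠ 0) :
    ratMap (2 ^ ℓ) u + ζ = (u + ζ) ^ 2 ^ ℓ * (u + ζ ^ 2) / (u ^ 2 ^ ℓ + u + 1) := by
  rw [ratMap, div_add' _ _ _ hN, add_pow_char_pow, hζQ]
  congr 1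
  linear_combination (-(u ^ 2 ^ ℓ + u) - ζ * (ζ - 1)) * hζ +
    (ζ + 1) * (u ^ 2 ^ ℓ + u) * CharTwo.two_eq_zero (R := F)

theorem ratMap_add_div_ratMap_add {ℓ : ℕ} {ω u : F} (hω : ω ^ 2 + ω + 1 = 0)
    (hωQ : ω ^ 2 ^ ℓ = ω ^ 2) (hN : u ^ 2 ^ ℓ + u + 1 ≠ 0) (hu₁ : u + ω ≠ 0)
    (hu₂ : u + ω ^ 2 ≠ 0) :
    (ratMap (2 ^ ℓ) u + ω) / (ratMap (2 ^ ℓ) u + ω ^ 2) =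
      ((u + ω) / (u + ω ^ 2)) ^ (2 ^ ℓ - 1) := by
  have hω₂Q : (ω ^ 2) ^ 2 ^ ℓ = (ω ^ 2) ^ 2 := by rw [pow_right_comm, hωQ]
  have hω₄ : (ω ^ 2) ^ 2 = ω := by linear_combination (ω ^ 2 - ω) * hω
  rw [ratMap_add hω hωQ hN, ratMap_add (sq_sq_add_sq_add_one_eq_zero hω) hω₂Q hN, hω₄,
    div_div_div_cancel_right₀ hN, pow_sub₀ _ (div_ne_zero hu₁ hu₂) Nat.one_le_two_pow, pow_one,
    div_pow]
  field_simp

theorem add_div_add_pow_succ {k : ℕ} {ω u : F} (hω : ω ^ 2 + ω + 1 = 0) (hωq : ω ^ 2 ^ k = ω)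
    (hu : u ^ (2 ^ k + 1) = 1) : ((u + ω) / (u + ω ^ 2)) ^ (2 ^ k + 1) = ω ^ 2 := by
  have hω₂ := sq_sq_add_sq_add_one_eq_zero hω
  have hω₂q : (ω ^ 2) ^ 2 ^ k = ω ^ 2 := by rw [pow_right_comm, hωq]
  have hu0 : u ≠ 0 := by rintro rfl; simp at hu
  have h₁ := mul_add_pow_succ hω hωq hu
  have h₂ := mul_add_pow_succ hω₂ hω₂q hu
  rw [div_pow, div_eq_iff (pow_ne_zero _ (add_ne_zero_of_pow_succ_eq_one hω₂ hω₂q hu))]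
  apply mul_left_cancel₀ hu0
  linear_combination h₁ - ω ^ 2 * h₂ - (ω - 1) * (u + ω ^ 2) * (ω * u + ω ^ 2 * (ω ^ 3 + 1)) * hω

theorem injOn_ratMap {k ℓ : ℕ} {ω : F} (hω : ω ^ 2 + ω + 1 = 0) (hωq : ω ^ 2 ^ k = ω)
    (hωQ : ω ^ 2 ^ ℓ = ω ^ 2) (hcop : ((2 ^ ℓ) ^ 2 - 1).Coprime (2 ^ k + 1)) :
    InjOn (ratMap (2 ^ ℓ)) {u : F | u ^ (2 ^ k + 1) = 1} := by
  have hω₂ := sq_sq_add_sq_add_one_eq_zero hω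
  have hω₂q : (ω ^ 2) ^ 2 ^ k = ω ^ 2 := by rw [pow_right_comm, hωq]
  have hcop' : (2 ^ ℓ - 1).Coprime (2 ^ k + 1) :=
    hcop.coprime_dvd_left (by simpa only [one_pow] using Nat.sub_dvd_pow_sub_pow (2 ^ ℓ) 1 2)
  have hne : ω ≠ ω ^ 2 := fun h =>
    one_ne_zero (by linear_combination hω + h - ω * CharTwo.two_eq_zero (R := F) : (1 : F) = 0)
  intro u (hu : u ^ (2 ^ k + 1) = 1) v (hv : v ^ (2 ^ k + 1) = 1) h
  have hconj : ∀ x : F, x ^ (2 ^ k + 1) = 1 → (ratMap (2 ^ ℓ) x + ω) / (ratMap (2 ^ ℓ) x + ω ^ 2) =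
      ((x + ω) / (x + ω ^ 2)) ^ (2 ^ ℓ - 1) := fun x hx =>
    ratMap_add_div_ratMap_add hω hωQ (pow_add_add_one_ne_zero hcop hx)
      (add_ne_zero_of_pow_succ_eq_one hω hωq hx) (add_ne_zero_of_pow_succ_eq_one hω₂ hω₂q hx)
  refine injOn_add_div_add hne (add_ne_zero_of_pow_succ_eq_one hω₂ hω₂q hu)
    (add_ne_zero_of_pow_succ_eq_one hω₂ hω₂q hv) ?_
  refine eq_of_pow_eq_pow_of_coprime hcop' ?_ (by rw [← hconj u hu, ← hconj v hv, h])
    (by rw [add_div_add_pow_succ hω hωq hu, add_div_add_pow_succ hω hωq hv])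
  exact div_ne_zero (add_ne_zero_of_pow_succ_eq_one hω hωq hv)
    (add_ne_zero_of_pow_succ_eq_one hω₂ hω₂q hv)

end CharTwo

theorem stmt_12_general (k ℓ : ℕ) (hke : Even k) (hlo : Odd ℓ)
    (q Q : ℕ) (hq : q = 2 ^ k) (hQ : Q = 2 ^ ℓ)
    (F : Type) [Field F] [Fintype F] (hF : Fintype.card F = q ^ 2)
    (B : Polynomial F)
    (hB : B * (Polynomial.X ^ 2 + Polynomial.X + 1) =
      Polynomial.X ^ Q + Polynomial.X + 1)
    (r : ℕ) (hr : 0 < r) (hrq : Nat.gcd r (q - 1) = 1)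
    (hmod : r ≡ Q - 1 [MOD q + 1]) :
    Function.Bijective (fun c : F => c ^ r * B.eval (c ^ (q - 1))) := by
  subst hq hQ
  have : CharP F 2 := charP_of_card_eq_prime_pow (hF.trans (pow_mul 2 k 2).symm)
  have hcard : Fintype.card F - 1 = (2 ^ k - 1) * (2 ^ k + 1) := by
    rw [hF, mul_comm, ← Nat.sq_sub_sq, one_pow]
  have hk3 := Nat.two_pow_mod_three_of_even hke
  obtain ⟨ω, hω⟩ := FiniteField.exists_sq_add_self_add_one_eq_zero (K := F) <| by
    rw [Nat.card_eq_fintype_card, hcard]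
    exact dvd_mul_of_dvd_left (by omega) _
  have hω3 : ω ^ 3 = 1 := by linear_combination (ω - 1) * hω
  have hcop := Nat.coprime_two_pow_sq_sub_one_two_pow_add_one hlo hke
  have hμ : ∀ c : F, c ≠ 0 → (c ^ (2 ^ k - 1)) ^ (2 ^ k + 1) = 1 := fun c hc => by
    rw [← pow_mul, ← hcard, FiniteField.pow_card_sub_one_eq_one c hc]
  have hBu : ∀ u : F, B.eval u * (u ^ 2 + u + 1) = u ^ 2 ^ ℓ + u + 1 := fun u => by
    simpa using congrArg (Polynomial.eval u) hB
  have hinj : InjOn (ratMap (2 ^ ℓ)) {u : F | u ^ (2 ^ k + 1) = 1} :=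
    injOn_ratMap hω (by rw [pow_eq_pow_mod _ hω3, hk3, pow_one])
      (by rw [pow_eq_pow_mod _ hω3, Nat.two_pow_mod_three_of_odd hlo]) hcop
  refine Finite.injective_iff_bijective.mp <| injective_pow_mul_comp_pow (h := B.eval) hr.ne' hrq hμ
    (fun u hu hB0 => pow_add_add_one_ne_zero hcop hu (by rw [← hBu u, hB0, zero_mul]))
    (hinj.congr fun u (hu : u ^ (2 ^ k + 1) = 1) => ?_)
  simp only [pow_eq_pow_of_modEq hmod hu]
  exact (eq_div_of_mul_eq (pow_add_add_one_ne_zero hcop hu)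
    (pow_sub_one_mul_pow_sub_one_mul_eq Nat.one_le_two_pow hu (hBu u))).symm

/-- Corollary 5.2, case (4.2): with `B(X) = (X^Q+X+1)/(X²+X+1)`, the polynomial
`X^r B(X^{q-1})` is a permutation polynomial of `F_{q²}`. -/
theorem stmt_12 (k ℓ : ℕ) (hk : 0 < k) (hl : 0 < ℓ) (hke : Even k) (hlo : Odd ℓ)
    (q Q : ℕ) (hq : q = 2 ^ k) (hQ : Q = 2 ^ ℓ)
    (F : Type) [Field F] [Fintype F] (hF : Fintype.card F = q ^ 2)
    (B : Polynomial F)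
    (hB : B * (Polynomial.X ^ 2 + Polynomial.X + 1) =
      Polynomial.X ^ Q + Polynomial.X + 1)
    (r : ℕ) (hr : 0 < r) (hrq : Nat.gcd r (q - 1) = 1)
    (hmod : r ≡ Q - 1 [MOD q + 1]) :
    Function.Bijective (fun c : F => c ^ r * B.eval (c ^ (q - 1))) :=
  stmt_12_general k ℓ hke hlo q Q hq hQ F hF B hB r hr hrq hmod
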